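/- Let d ≥ 4 and s = (1, q_1, …, q_{d−1}) with 1 > q_1 > q_2 > … > q_{d−1} > 0, and let T be the d×d matrix whose column 0 equals (1−q_1, q_1−q_2, …, q_{d−2}−q_{d−1}, q_{d−1})^T and whose column j, for 1 ≤ j ≤ d−1, is the standard basis vector e_{j−1}. Then for every probability vector p whose ratios p_i/s_i are pairwise distinct, the vector T p is not an extreme point of p^TP. -/

import Mathlib

/-!
For `a ≠ b` below the last level, the rank-one perturbation
`Tnb + t • (e_a - e_b) (s_{a+1} e_0 - e_{a+1})ᵀ` is still a thermal process for small `t ≥ 0`: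
column sums and `s` are preserved, and the only entries that decrease are
`Tnb a (a+1) = 1` and `Tnb b 0 = s_b - s_{b+1} > 0`. It moves `Tnb p` by `t c_{a+1} (e_a - e_b)`,
where `c_k = s_k p_0 - p_k` is nonzero for `k ≥ 1` because the ratios `p_k / s_k` are distinct.
As `d ≥ 4`, two of `c_1, c_2, c_3` have the same sign, so perturbing along `(a, b)` and along
`(b, a)` with suitably scaled `t` moves `Tnb p` by `± δ (e_a - e_b)` with `δ ≠ 0`: it is the
midpoint of two other achievable states.
-/

/-- The set of thermal processes. -/
def TP (d : ℕ) (s : Fin d → ℝ) : Set (Matrix (Fin d) (Fin d) ℝ) :=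
  {T | (∀ i j, 0 ≤ T i j) ∧ (∀ j, ∑ i, T i j = 1) ∧
    T.mulVec (fun i => s i / ∑ k, s k) = (fun i => s i / ∑ k, s k)}

/-- A probability vector. -/
def ProbVec (d : ℕ) (p : Fin d → ℝ) : Prop := (∀ i, 0 ≤ p i) ∧ ∑ i, p i = 1

/-- `p^TP`, the set of states achievable from `p` by thermal processes. -/
def achievable (d : ℕ) (s p : Fin d → ℝ) : Set (Fin d → ℝ) :=
  (fun T : Matrix (Fin d) (Fin d) ℝ => T.mulVec p) '' TP d s

/-- The non-biplanar matrix `T`: column `0` is `(s₀−s₁, s₁−s₂, …, s_{d−2}−s_{d−1},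
s_{d−1})ᵀ` and column `j`, for `j ≥ 1`, is the standard basis vector `e_{j−1}`. -/
def Tnb (d : ℕ) (s : Fin d → ℝ) : Matrix (Fin d) (Fin d) ℝ :=
  Matrix.of fun i j =>
    if (j : ℕ) = 0 then
      (if h : (i : ℕ) + 1 < d then s i - s ⟨(i : ℕ) + 1, h⟩ else s i)
    else if (i : ℕ) + 1 = (j : ℕ) then 1 else 0

open Matrix Finset

theorem Fin.sum_castSucc_sub_succ {M : Type*} [AddCommGroup M] {n : ℕ} (f : Fin (n + 1) → M) :
    ∑ i : Fin n, (f i.castSucc - f i.succ) = f 0 - f (Fin.last n) := by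
  rw [sum_sub_distrib, sub_eq_sub_iff_add_eq_add, ← Fin.sum_univ_castSucc, ← Fin.sum_univ_succ]

theorem exists_ne_mul_pos {ι : Type*} [Fintype ι] (f : ι → ℝ) (hf : ∀ i, f i ≠ 0)
    (hι : 2 < Fintype.card ι) : ∃ i j, i ≠ j ∧ 0 < f i * f j := by
  obtain ⟨i, j, hij, hsign⟩ :=
    Fintype.exists_ne_map_eq_of_card_lt (fun i => 0 < f i) (by rwa [Fintype.card_prop])
  refine ⟨i, j, hij, ?_⟩
  rcases (hf i).lt_or_gt with hi | hi
  · have hj : f j < 0 := lt_of_le_of_ne (not_lt.1 (hsign ▸ hi.not_gt)) (hf j)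
    exact mul_pos_of_neg_of_neg hi hj
  · exact mul_pos hi (hsign ▸ hi)

theorem notMem_extremePoints_of_add_mem_of_sub_mem {𝕜 E : Type*} [Field 𝕜] [LinearOrder 𝕜]
    [IsStrictOrderedRing 𝕜] [AddCommGroup E] [Module 𝕜 E] {A : Set E} {x v : E} (hv : v ≠ 0)
    (h₁ : x + v ∈ A) (h₂ : x - v ∈ A) : x ∉ A.extremePoints 𝕜 := by
  have := invertibleOfNonzero (two_ne_zero : (2 : 𝕜) ≠ 0)
  intro hx
  have := ((mem_extremePoints.1 hx).2 _ h₁ _ h₂ (mem_openSegment_add_sub x v)).1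
  exact hv (by simpa using this)

theorem mem_TP_of_mulVec_self {d : ℕ} {s : Fin d → ℝ} {T : Matrix (Fin d) (Fin d) ℝ}
    (hnn : ∀ i j, 0 ≤ T i j) (hcol : ∀ j, ∑ i, T i j = 1) (hs : T *ᵥ s = s) :
    T ∈ TP d s := by
  refine ⟨hnn, hcol, ?_⟩
  have hg : (fun i => s i / ∑ k, s k) = (∑ k, s k)⁻¹ • s := by
    ext i; simp [div_eq_inv_mul]
  rw [hg, mulVec_smul, hs]

theorem add_vecMulVec_mem_TP {d : ℕ} {s : Fin d → ℝ} {T : Matrix (Fin d) (Fin d) ℝ}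
    {u v : Fin d → ℝ} (hT : T ∈ TP d s) (hu : ∑ i, u i = 0) (hv : v ⬝ᵥ s = 0)
    (hnn : ∀ i j, 0 ≤ T i j + u i * v j) : T + vecMulVec u v ∈ TP d s := by
  obtain ⟨-, hcol, hg⟩ := hT
  refine ⟨hnn, fun j => ?_, ?_⟩
  · simp [sum_add_distrib, hcol, vecMulVec_apply, ← sum_mul, hu]
  · rw [add_mulVec, hg, vecMulVec_mulVec, op_smul_eq_smul]
    rw [dotProduct] at hv
    simp [dotProduct, mul_div_assoc', ← sum_div, hv]

section Tnb

variable {n : ℕ} (s : Fin (n + 1) → ℝ)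

theorem Tnb_castSucc_zero (i : Fin n) : Tnb (n + 1) s i.castSucc 0 = s i.castSucc - s i.succ := by
  rw [Tnb, of_apply, if_pos (Fin.val_zero _), dif_pos (by simp)]
  rfl

theorem Tnb_last_zero : Tnb (n + 1) s (Fin.last n) 0 = s (Fin.last n) := by
  rw [Tnb, of_apply, if_pos (Fin.val_zero _), dif_neg (by simp)]

theorem Tnb_succ (i : Fin (n + 1)) (k : Fin n) :
    Tnb (n + 1) s i k.succ = if i = k.castSucc then 1 else 0 := by
  rw [Tnb, of_apply, if_neg (by simp)]
  simp only [Fin.val_succ, Nat.add_right_cancel_iff, Fin.ext_iff, Fin.val_castSucc]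

theorem sum_Tnb_zero : ∑ i, Tnb (n + 1) s i 0 = s 0 := by
  rw [Fin.sum_univ_castSucc]
  simp only [Tnb_castSucc_zero, Tnb_last_zero]
  rw [Fin.sum_castSucc_sub_succ, sub_add_cancel]

theorem Tnb_mulVec_self (hs0 : s 0 = 1) : Tnb (n + 1) s *ᵥ s = s := by
  ext i
  rw [mulVec, dotProduct, Fin.sum_univ_succ]
  simp only [Tnb_succ, ite_mul, one_mul, zero_mul, hs0, mul_one]
  induction i using Fin.lastCases with
  | last => simp [Tnb_last_zero, eq_comm, Fin.castSucc_ne_last]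
  | cast i => simp [Tnb_castSucc_zero]

variable {s}

theorem Tnb_nonneg (hs : Antitone s) (hnn : ∀ i, 0 ≤ s i) (i j : Fin (n + 1)) :
    0 ≤ Tnb (n + 1) s i j := by
  induction j using Fin.cases with
  | zero =>
    induction i using Fin.lastCases with
    | last => simpa [Tnb_last_zero] using hnn _
    | cast i => simpa [Tnb_castSucc_zero] using hs (Fin.castSucc_le_succ i)
  | succ k => rw [Tnb_succ]; positivity

theorem Tnb_mem_TP (hs : Antitone s) (hnn : ∀ i, 0 ≤ s i) (hs0 : s 0 = 1) :
    Tnb (n + 1) s ∈ TP (n + 1) s := by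
  refine mem_TP_of_mulVec_self (Tnb_nonneg hs hnn) (fun j => ?_) (Tnb_mulVec_self s hs0)
  induction j using Fin.cases with
  | zero => rw [sum_Tnb_zero, hs0]
  | succ k => simp [Tnb_succ]

end Tnb

section Perturbation

variable {n : ℕ} (s : Fin (n + 1) → ℝ)

def tnbPerturbation (a b : Fin n) : Matrix (Fin (n + 1)) (Fin (n + 1)) ℝ :=
  vecMulVec (Pi.single a.castSucc 1 - Pi.single b.castSucc 1)
    (s a.succ • Pi.single 0 1 - Pi.single a.succ 1)

theorem tnbPerturbation_mulVec (a b : Fin n) (p : Fin (n + 1) → ℝ) :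
    tnbPerturbation s a b *ᵥ p =
      (s a.succ * p 0 - p a.succ) • (Pi.single a.castSucc 1 - Pi.single b.castSucc 1) := by
  rw [tnbPerturbation, vecMulVec_mulVec, op_smul_eq_smul]
  simp [sub_dotProduct, single_dotProduct, mul_comm]

variable {s}

theorem Tnb_add_smul_tnbPerturbation_mem_TP (hs : Antitone s) (hnn : ∀ i, 0 ≤ s i)
    (hs0 : s 0 = 1) {a b : Fin n} (hab : a ≠ b) {t : ℝ} (ht0 : 0 ≤ t) (ht1 : t ≤ 1)
    (hts : t * s a.succ ≤ s b.castSucc - s b.succ) :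
    Tnb (n + 1) s + t • tnbPerturbation s a b ∈ TP (n + 1) s := by
  rw [tnbPerturbation, ← smul_vecMulVec]
  have hab' : a.castSucc ≠ b.castSucc := Fin.castSucc_injective n |>.ne hab
  refine add_vecMulVec_mem_TP (Tnb_mem_TP hs hnn hs0) (by simp [← mul_sum, sum_sub_distrib])
    (by simp [sub_dotProduct, single_dotProduct, hs0]) fun i j => ?_
  have hT := Tnb_nonneg hs hnn i j
  induction j using Fin.cases with
  | zero =>
    by_cases hia : i = a.castSucc
    · subst hia
      simp [hab', (Fin.succ_ne_zero a).symm]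
      exact add_nonneg hT (mul_nonneg ht0 (hnn _))
    by_cases hib : i = b.castSucc
    · subst hib
      simp [hab'.symm, (Fin.succ_ne_zero a).symm, Tnb_castSucc_zero]
      linarith
    · simpa [hia, hib, Pi.single_apply] using hT
  | succ k =>
    rw [Tnb_succ] at hT ⊢
    by_cases hka : k = a
    · subst hka
      by_cases hia : i = k.castSucc
      · subst hia; simp [hab']; linarith
      by_cases hib : i = b.castSucc
      · subst hib; simp [hab'.symm]; linarith
      · simp [hia, hib]
    · simpa [hka, Pi.single_apply, Fin.succ_ne_zero] using hT

theorem exists_pos_Tnb_mulVec_add_smul_mem_achievable (hs : StrictAnti s)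
    (hpos : ∀ i, 0 < s i) (hs0 : s 0 = 1) {a b : Fin n} (hab : a ≠ b)
    (p : Fin (n + 1) → ℝ) :
    ∃ η > (0 : ℝ), ∀ t, 0 ≤ t → t ≤ η → Tnb (n + 1) s *ᵥ p +
      (t * (s a.succ * p 0 - p a.succ)) • (Pi.single a.castSucc 1 - Pi.single b.castSucc 1) ∈
        achievable (n + 1) s p := by
  refine ⟨min 1 ((s b.castSucc - s b.succ) / s a.succ),
    lt_min one_pos (div_pos (sub_pos.2 (hs Fin.castSucc_lt_succ)) (hpos _)),
    fun t ht0 htη => ⟨Tnb (n + 1) s + t • tnbPerturbation s a b, ?_, ?_⟩⟩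
  · exact Tnb_add_smul_tnbPerturbation_mem_TP hs.antitone (fun i => (hpos i).le) hs0 hab ht0
      (htη.trans (min_le_left _ _)) ((le_div_iff₀ (hpos _)).1 (htη.trans (min_le_right _ _)))
  · beta_reduce
    rw [add_mulVec, smul_mulVec, tnbPerturbation_mulVec, smul_smul]

end Perturbation

/-- for `d ≥ 4` and `s = (1, q₁, …, q_{d−1})` with
`1 > q₁ > … > q_{d−1} > 0`, and for every probability vector `p` with pairwise
distinct ratios `p i / s i`, the vector `Tnb d s · p` is not an extreme point of
`p^TP`. -/
theorem stmt19 (d : ℕ) (hd : 4 ≤ d) (s : Fin d → ℝ)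
    (hs0 : s ⟨0, by omega⟩ = 1) (hanti : StrictAnti s) (hpos : ∀ i, 0 < s i)
    (p : Fin d → ℝ)
    (hdist : ∀ i j : Fin d, i ≠ j → p i / s i ≠ p j / s j) :
    (Tnb d s).mulVec p ∉ Set.extremePoints ℝ (achievable d s p) := by
  obtain ⟨n, rfl⟩ : ∃ n, d = n + 1 := ⟨d - 1, by omega⟩
  replace hs0 : s 0 = 1 := hs0
  set c : Fin n → ℝ := fun k => s k.succ * p 0 - p k.succ
  have hc : ∀ k, c k ≠ 0 := fun k hk => hdist 0 k.succ (Fin.succ_ne_zero k).symm <| by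
    rw [hs0, div_one, eq_div_iff (hpos _).ne']
    linarith [hk]
  obtain ⟨a, b, hab, hcab⟩ := exists_ne_mul_pos c hc (by simp; omega)
  obtain ⟨η, hη, hA⟩ := exists_pos_Tnb_mulVec_add_smul_mem_achievable hanti hpos hs0 hab p
  obtain ⟨η', hη', hB⟩ :=
    exists_pos_Tnb_mulVec_add_smul_mem_achievable hanti hpos hs0 hab.symm p
  have hq : 0 < c a / c b := div_pos_iff.2 (mul_pos_iff.1 hcab)
  set t := min η (η' / (c a / c b))
  have ht : 0 < t := lt_min hη (div_pos hη' hq)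
  have hu : (Pi.single a.castSucc 1 - Pi.single b.castSucc 1 : Fin (n + 1) → ℝ) ≠ 0 :=
    fun h => by simpa [(Fin.castSucc_injective n).ne hab] using congrFun h a.castSucc
  have hx₂ := hB (c a / c b * t) (by positivity) ((le_div_iff₀' hq).1 (min_le_right _ _))
  rw [← neg_sub (Pi.single a.castSucc _), smul_neg, ← sub_eq_add_neg] at hx₂
  change _ - (c a / c b * t * c b) • _ ∈ _ at hx₂
  rw [show c a / c b * t * c b = t * c a by field_simp [hc b]] at hx₂
  exact notMem_extremePoints_of_add_mem_of_sub_mem (smul_ne_zero (mul_ne_zero ht.ne' (hc a)) hu)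
    (hA t ht.le (min_le_left _ _)) hx₂
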